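/- arXiv:math/0404534 — 5 statements merged into one kernel-verified Lean document; each statement's English description precedes it below -/
import Mathlib

section
/- Let K be a field of characteristic zero, let 𝔰 be a Lie algebra over K, and let 𝔫 be a solvable Lie algebra endowed with a completely reducible action of 𝔰 by derivations. Then the Lie subalgebra [𝔰,𝔫] generated by all brackets [s,n] (s ∈ 𝔰, n ∈ 𝔫) is an ideal of 𝔫 and satisfies [𝔰,[𝔰,𝔫]] = [𝔰,𝔫]. -/
/-!
The span `W` of all `D s n` is `𝔰`-invariant, so complete reducibility gives an invariant
complement `q`; then `D s q ⊆ W ∩ q = 0`, i.e. `𝔰` kills `q`. For `a ∈ q` the Leibniz rule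
reads `⁅a, D s n⁆ = D s ⁅a, n⁆`, so writing `m = w + a` with `w ∈ W` shows that `⁅m, D s n⁆` stays
in the Lie span of the `D s n`, and `D s n = D s w` shows that the `D s n` with `n` in that
Lie span already generate it.
-/

open LieSubalgebra

namespace LieDerivation

variable {R L : Type*} [CommRing R] [LieRing L] [LieAlgebra R L]

lemma lie_apply_of_apply_eq_zero (D : LieDerivation R L L) {a : L} (ha : D a = 0) (b : L) :
    ⁅a, D b⁆ = D ⁅a, b⁆ := by
  rw [apply_lie_eq_add, ha, zero_lie, add_zero]

end LieDerivation

namespace LieSubalgebra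

variable {R L : Type*} [CommRing R] [LieRing L] [LieAlgebra R L]

lemma lie_mem_lieSpan_of_forall_lie_mem {s : Set L} (hs : ∀ g ∈ s, ∀ m : L, ⁅m, g⁆ ∈ lieSpan R L s) :
    ∀ y ∈ lieSpan R L s, ∀ m : L, ⁅m, y⁆ ∈ lieSpan R L s := by
  intro y hy
  induction hy using lieSpan_induction with
  | mem g hg => exact hs g hg
  | zero => simp
  | add x y _ _ hx hy => intro m; rw [lie_add]; exact add_mem (hx m) (hy m)
  | smul c x _ hx => intro m; rw [lie_smul]; exact (lieSpan R L s).smul_mem c (hx m)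
  | lie x y hx' hy' hx hy =>
    intro m
    rw [leibniz_lie]
    exact add_mem (lie_mem _ (hx m) hy') (lie_mem _ hx' (hy m))

end LieSubalgebra

section DerivationFamily

variable {R S L : Type*} [CommRing R] [LieRing L] [LieAlgebra R L] (D : S → LieDerivation R L L)

def derivationImage : Set L := {x | ∃ (s : S) (n : L), D s n = x}

lemma exists_isCompl_span_derivationImage_forall_apply_eq_zero
    (hcr : ∀ p : Submodule R L, (∀ s, ∀ x ∈ p, D s x ∈ p) →
      ∃ q : Submodule R L, (∀ s, ∀ x ∈ q, D s x ∈ q) ∧ IsCompl p q) :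
    ∃ q : Submodule R L, IsCompl (Submodule.span R (derivationImage D)) q ∧
      ∀ s, ∀ a ∈ q, D s a = 0 := by
  obtain ⟨q, hq_inv, hq⟩ :=
    hcr (Submodule.span R (derivationImage D)) fun s x _ => Submodule.subset_span ⟨s, x, rfl⟩
  refine ⟨q, hq, fun s a ha => ?_⟩
  exact (Submodule.mem_bot R).1 <|
    hq.disjoint.le_bot ⟨Submodule.subset_span ⟨s, a, rfl⟩, hq_inv s a ha⟩

variable {D} {q : Submodule R L}

lemma exists_mem_lieSpan_derivationImage_add_eq
    (hq : IsCompl (Submodule.span R (derivationImage D)) q) (m : L) :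
    ∃ w ∈ lieSpan R L (derivationImage D), ∃ a ∈ q, w + a = m := by
  obtain ⟨w, hw, a, ha, rfl⟩ := Submodule.mem_sup.1 (hq.sup_eq_top ▸ Submodule.mem_top (x := m))
  exact ⟨w, submodule_span_le_lieSpan hw, a, ha, rfl⟩

lemma lie_mem_lieSpan_derivationImage
    (hq : IsCompl (Submodule.span R (derivationImage D)) q) (hq0 : ∀ s, ∀ a ∈ q, D s a = 0) :
    ∀ y ∈ lieSpan R L (derivationImage D), ∀ m : L, ⁅m, y⁆ ∈ lieSpan R L (derivationImage D) := by
  refine lie_mem_lieSpan_of_forall_lie_mem ?_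
  rintro _ ⟨s, n, rfl⟩ m
  obtain ⟨w, hw, a, ha, rfl⟩ := exists_mem_lieSpan_derivationImage_add_eq hq m
  rw [add_lie, (D s).lie_apply_of_apply_eq_zero (hq0 s a ha)]
  exact add_mem (lie_mem _ hw (subset_lieSpan ⟨s, n, rfl⟩)) (subset_lieSpan ⟨s, _, rfl⟩)

lemma lieSpan_derivationImage_lieSpan
    (hq : IsCompl (Submodule.span R (derivationImage D)) q) (hq0 : ∀ s, ∀ a ∈ q, D s a = 0) :
    lieSpan R L {x | ∃ s, ∃ n ∈ lieSpan R L (derivationImage D), D s n = x} =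
      lieSpan R L (derivationImage D) := by
  apply le_antisymm <;> rw [lieSpan_le]
  · rintro _ ⟨s, n, -, rfl⟩
    exact subset_lieSpan ⟨s, n, rfl⟩
  · rintro _ ⟨s, n, rfl⟩
    obtain ⟨w, hw, a, ha, rfl⟩ := exists_mem_lieSpan_derivationImage_add_eq hq n
    rw [map_add, hq0 s a ha, add_zero]
    exact subset_lieSpan ⟨s, w, hw, rfl⟩

end DerivationFamily

theorem stmt0_general (K : Type*) [Field K]
    (S : Type*) [LieRing S] [LieAlgebra K S]
    (N : Type*) [LieRing N] [LieAlgebra K N]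
    (i : S →ₗ⁅K⁆ LieDerivation K N N)
    (_hcr : ∀ p : Submodule K N, (∀ s : S, ∀ x ∈ p, i s x ∈ p) →
      ∃ q : Submodule K N, (∀ s : S, ∀ x ∈ q, i s x ∈ q) ∧ IsCompl p q) :
    (∀ y ∈ LieSubalgebra.lieSpan K N {x | ∃ (s : S) (n : N), i s n = x}, ∀ m : N,
        ⁅m, y⁆ ∈ LieSubalgebra.lieSpan K N {x | ∃ (s : S) (n : N), i s n = x}) ∧
    LieSubalgebra.lieSpan K N
        {x | ∃ (s : S), ∃ n ∈ LieSubalgebra.lieSpan K N {x | ∃ (s : S) (n : N), i s n = x},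
          i s n = x}
      = LieSubalgebra.lieSpan K N {x | ∃ (s : S) (n : N), i s n = x} := by
  obtain ⟨q, hq, hq0⟩ := exists_isCompl_span_derivationImage_forall_apply_eq_zero i _hcr
  exact ⟨lie_mem_lieSpan_derivationImage hq hq0, lieSpan_derivationImage_lieSpan hq hq0⟩

/-- For a solvable Lie `𝔰`-algebra `𝔫` (a Lie algebra with a completely
reducible action of `𝔰` by derivations), the Lie subalgebra `[𝔰,𝔫]` generated by all
brackets `[s,n]` is an ideal of `𝔫` and satisfies `[𝔰,[𝔰,𝔫]] = [𝔰,𝔫]`. -/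
theorem stmt0 (K : Type*) [Field K] [CharZero K]
    (S : Type*) [LieRing S] [LieAlgebra K S]
    (N : Type*) [LieRing N] [LieAlgebra K N] [Module.Finite K N]
    (_hsolv : LieAlgebra.IsSolvable N)
    (i : S →ₗ⁅K⁆ LieDerivation K N N)
    (_hcr : ∀ p : Submodule K N, (∀ s : S, ∀ x ∈ p, i s x ∈ p) →
      ∃ q : Submodule K N, (∀ s : S, ∀ x ∈ q, i s x ∈ q) ∧ IsCompl p q) :
    (∀ y ∈ LieSubalgebra.lieSpan K N {x | ∃ (s : S) (n : N), i s n = x}, ∀ m : N,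
        ⁅m, y⁆ ∈ LieSubalgebra.lieSpan K N {x | ∃ (s : S) (n : N), i s n = x}) ∧
    LieSubalgebra.lieSpan K N
        {x | ∃ (s : S), ∃ n ∈ LieSubalgebra.lieSpan K N {x | ∃ (s : S) (n : N), i s n = x},
          i s n = x}
      = LieSubalgebra.lieSpan K N {x | ∃ (s : S) (n : N), i s n = x} :=
  stmt0_general K S N i _hcr
end

section
/- Let 𝔰 be a Lie algebra over a field of characteristic zero and 𝔫 a solvable Lie 𝔰-algebra (completely reducible 𝔰-action) such that [𝔰,D𝔫] = 0, where D𝔫 is the derived subalgebra. Then the subalgebra [𝔰,𝔫] is 2-nilpotent, i.e. [[𝔰,𝔫], D[𝔰,𝔫]] = 0. -/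
/-! A derivation `D` of `𝔫` that kills `D𝔫` takes values in the centralizer of `D𝔫`: by the
Leibniz rule, `[D x, m] = D [x, m] - [x, D m] = 0` for `m ∈ D𝔫`. The centralizer of an ideal is
a subalgebra, so it contains the subalgebra `[𝔰, 𝔫]` generated by the values of the derivations
`i s`; in particular `[𝔰, 𝔫]` commutes with its own brackets. -/

open LieAlgebra

namespace LieDerivation

variable {R L : Type*} [CommRing R] [LieRing L] [LieAlgebra R L]

theorem apply_eq_zero_of_mem_derivedSeries_one (D : LieDerivation R L L)
    (hD : ∀ a b : L, D ⁅a, b⁆ = 0) {m : L} (hm : m ∈ derivedSeries R L 1) : D m = 0 := by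
  rw [← LieSubmodule.mem_toSubmodule, derivedSeries_def, derivedSeriesOfIdeal_succ,
    derivedSeriesOfIdeal_zero, LieSubmodule.lieIdeal_oper_eq_linear_span'] at hm
  refine (Submodule.span_le (p := LinearMap.ker (D : L →ₗ[R] L))).2 ?_ hm
  rintro _ ⟨a, -, b, -, rfl⟩
  exact hD a b

theorem apply_mem_ker_derivedSeries_one (D : LieDerivation R L L) (hD : ∀ a b : L, D ⁅a, b⁆ = 0)
    (x : L) : D x ∈ LieModule.ker R L (derivedSeries R L 1) := by
  rw [LieModule.mem_ker]
  rintro ⟨m, hm⟩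
  apply Subtype.ext
  have leibniz := D.apply_lie_eq_add x m
  rw [hD, D.apply_eq_zero_of_mem_derivedSeries_one hD hm, lie_zero, zero_add] at leibniz
  exact leibniz.symm

end LieDerivation

theorem stmt1_general (K : Type*) [Field K]
    (S : Type*) [LieRing S] [LieAlgebra K S]
    (N : Type*) [LieRing N] [LieAlgebra K N]
    (i : S →ₗ⁅K⁆ LieDerivation K N N)
    (hDn : ∀ (s : S) (a b : N), i s ⁅a, b⁆ = 0) :
    ∀ a ∈ LieSubalgebra.lieSpan K N {x | ∃ (s : S) (n : N), i s n = x},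
    ∀ b ∈ LieSubalgebra.lieSpan K N {x | ∃ (s : S) (n : N), i s n = x},
    ∀ c ∈ LieSubalgebra.lieSpan K N {x | ∃ (s : S) (n : N), i s n = x},
      ⁅a, ⁅b, c⁆⁆ = 0 := by
  intro a ha b _ c _
  have hspan : LieSubalgebra.lieSpan K N {x | ∃ (s : S) (n : N), i s n = x} ≤
      (LieModule.ker K N (derivedSeries K N 1)).toLieSubalgebra :=
    LieSubalgebra.lieSpan_le.2 <| by
      rintro _ ⟨s, n, rfl⟩
      exact (i s).apply_mem_ker_derivedSeries_one (hDn s) n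
  have hbc : ⁅b, c⁆ ∈ derivedSeries K N 1 :=
    LieSubmodule.lie_mem_lie (LieSubmodule.mem_top b) (LieSubmodule.mem_top c)
  exact congrArg Subtype.val ((LieModule.mem_ker _ _ _ a).1 (hspan ha) ⟨_, hbc⟩)

/-- If `𝔫` is a solvable Lie `𝔰`-algebra with `[𝔰, D𝔫] = 0`, then the
subalgebra `[𝔰,𝔫]` (generated by the brackets `[s,n]`) is 2-nilpotent, i.e. every
element of `[𝔰,𝔫]` commutes with every bracket of two elements of `[𝔰,𝔫]`. -/
theorem stmt1 (K : Type*) [Field K] [CharZero K]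
    (S : Type*) [LieRing S] [LieAlgebra K S]
    (N : Type*) [LieRing N] [LieAlgebra K N] [Module.Finite K N]
    (_hsolv : LieAlgebra.IsSolvable N)
    (i : S →ₗ⁅K⁆ LieDerivation K N N)
    (_hcr : ∀ p : Submodule K N, (∀ s : S, ∀ x ∈ p, i s x ∈ p) →
      ∃ q : Submodule K N, (∀ s : S, ∀ x ∈ q, i s x ∈ q) ∧ IsCompl p q)
    (hDn : ∀ (s : S) (a b : N), i s ⁅a, b⁆ = 0) :
    ∀ a ∈ LieSubalgebra.lieSpan K N {x | ∃ (s : S) (n : N), i s n = x},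
    ∀ b ∈ LieSubalgebra.lieSpan K N {x | ∃ (s : S) (n : N), i s n = x},
    ∀ c ∈ LieSubalgebra.lieSpan K N {x | ∃ (s : S) (n : N), i s n = x},
      ⁅a, ⁅b, c⁆⁆ = 0 :=
  stmt1_general K S N i hDn
end

section
/- Let 𝔰 be a Lie algebra over a field of characteristic zero. A solvable Lie 𝔰-algebra 𝔫 is minimal if and only if: (1) 𝔫 is 2-nilpotent; (2) [𝔰,𝔫] = 𝔫; (3) [𝔰,D𝔫] = 0; (4) 𝔫/D𝔫 is an irreducible 𝔰-module. -/
/-!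
Write `D = derivedSeries K N 1` for `D𝔫` and `T` for the image of the action. If `𝔫` is minimal,
`D` is an invariant subalgebra and `D ≠ 𝔫` by solvability, so `𝔰` kills `D`; the Lie span of `T` is
invariant too, and it cannot be killed, since by complete reducibility an action whose square
vanishes is zero; hence `T` generates `𝔫`. By the Leibniz rule `ad d` kills `T` for `d ∈ D`, so `D`
is central. An invariant `p ⊇ D` is a subalgebra; if `𝔰` kills it, `T` lies in an invariant
complement `q`, so `q + D ⊇ span T + D = 𝔫` and `p = D` by the modular law.

Conversely, for an invariant subalgebra `M` the sum `M + D` is invariant, so either `M ⊆ D` is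
killed by `𝔰`, or `M + D = 𝔫` and then `D = [M + D, M + D] = [M, M] ⊆ M` because `D` is central.
-/

open LieAlgebra Submodule LieSubalgebra

section

variable {K N : Type*} [CommRing K] [LieRing N] [LieAlgebra K N]

namespace LieAlgebra

lemma derivedSeries_one_le_iff {p : Submodule K N} :
    (derivedSeries K N 1 : Submodule K N) ≤ p ↔ ∀ a b : N, ⁅a, b⁆ ∈ p := by
  rw [coe_derivedSeries_one_eq, span_le]
  exact ⟨fun h a b => h ⟨a, b, rfl⟩, by rintro h _ ⟨a, b, rfl⟩; exact h a b⟩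

lemma lie_mem_derivedSeries_one (a b : N) : ⁅a, b⁆ ∈ derivedSeries K N 1 :=
  derivedSeries_one_le_iff.mp le_rfl a b

def _root_.Submodule.toLieSubalgebraOfDerivedLE (p : Submodule K N)
    (h : (derivedSeries K N 1 : Submodule K N) ≤ p) : LieSubalgebra K N :=
  { p with lie_mem' := fun _ _ => derivedSeries_one_le_iff.mp h _ _ }

lemma span_sup_derivedSeries_one_eq_top {X : Set N} (hX : lieSpan K N X = ⊤) :
    span K X ⊔ derivedSeries K N 1 = ⊤ := by
  let M := (span K X ⊔ derivedSeries K N 1).toLieSubalgebraOfDerivedLE le_sup_right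
  have hXM : lieSpan K N X ≤ M := lieSpan_le.mpr fun x hx => mem_sup_left (subset_span hx)
  rw [hX] at hXM
  exact eq_top_iff.mpr fun x _ => hXM (LieSubalgebra.mem_top x)

lemma lie_eq_zero_of_mem_derivedSeries_one (h : ∀ a b c : N, ⁅a, ⁅b, c⁆⁆ = 0) (x : N) {d : N}
    (hd : d ∈ derivedSeries K N 1) : ⁅x, d⁆ = 0 := by
  have : (derivedSeries K N 1 : Submodule K N) ≤ LinearMap.ker (LieModule.toEnd K N N x) :=
    derivedSeries_one_le_iff.mpr (h x)
  simpa using this hd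

lemma _root_.LieSubalgebra.eq_top_of_sup_derivedSeries_one_eq_top
    (h : ∀ a b c : N, ⁅a, ⁅b, c⁆⁆ = 0) (M : LieSubalgebra K N)
    (hM : M.toSubmodule ⊔ derivedSeries K N 1 = ⊤) : M = ⊤ := by
  have hcentral := lie_eq_zero_of_mem_derivedSeries_one (K := K) h
  have hDM : (derivedSeries K N 1 : Submodule K N) ≤ M.toSubmodule := by
    refine derivedSeries_one_le_iff.mpr fun a b => ?_
    obtain ⟨m, hm, d, hd, rfl⟩ := mem_sup.mp (hM.ge (mem_top a))
    obtain ⟨m', hm', d', hd', rfl⟩ := mem_sup.mp (hM.ge (mem_top b))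
    have : ⁅m + d, m' + d'⁆ = ⁅m, m'⁆ := by
      rw [lie_add, add_lie, add_lie, hcentral _ hd', hcentral _ hd', ← lie_skew d, hcentral _ hd]
      simp
    rw [this]
    exact M.lie_mem hm hm'
  rw [sup_eq_left.mpr hDM] at hM
  exact LieSubalgebra.toSubmodule_injective (by simpa using hM)

variable (K N) in
lemma derivedSeries_one_ne_top [IsSolvable N] [Nontrivial N] :
    (derivedSeries K N 1 : Submodule K N) ≠ ⊤ := by
  rw [ne_eq, LieIdeal.toLieSubalgebra_toSubmodule, LieSubmodule.toSubmodule_eq_top]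
  exact (derivedSeries_lt_top_of_solvable K N).ne

end LieAlgebra

namespace LieDerivation

variable (d : LieDerivation K N N)

lemma apply_mem_derivedSeries_one {x : N} (hx : x ∈ derivedSeries K N 1) :
    d x ∈ derivedSeries K N 1 := by
  have : (derivedSeries K N 1 : Submodule K N) ≤
      (derivedSeries K N 1 : Submodule K N).comap (d : N →ₗ[K] N) :=
    derivedSeries_one_le_iff.mpr fun a b => by
      rw [Submodule.mem_comap, coeFn_coe, apply_lie_eq_add]
      exact add_mem (lie_mem_derivedSeries_one _ _) (lie_mem_derivedSeries_one _ _)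
  exact this hx

lemma apply_eq_zero_of_mem_derivedSeries_one_s2 (h : ∀ a b : N, d ⁅a, b⁆ = 0) {x : N}
    (hx : x ∈ derivedSeries K N 1) : d x = 0 :=
  derivedSeries_one_le_iff (p := LinearMap.ker (d : N →ₗ[K] N)) |>.mpr h hx

lemma apply_mem_lieSpan {X : Set N} (h : ∀ x ∈ X, d x ∈ lieSpan K N X) {x : N}
    (hx : x ∈ lieSpan K N X) : d x ∈ lieSpan K N X := by
  induction hx using lieSpan_induction with
  | mem x hx => exact h x hx
  | zero => simp
  | add x y _ _ hx hy => simpa using add_mem hx hy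
  | smul c x _ hx => simpa using SMulMemClass.smul_mem c hx
  | lie x y hx' hy' hx hy =>
    rw [apply_lie_eq_add]
    exact add_mem (LieSubalgebra.lie_mem _ hx' hy) (LieSubalgebra.lie_mem _ hx hy')

end LieDerivation

section Action

variable {S : Type*} (ρ : S → LieDerivation K N N)

abbrev actionImage : Set N := {x | ∃ (s : S) (n : N), ρ s n = x}

def IsMinimal : Prop :=
  (∃ (s : S) (n : N), ρ s n ≠ 0) ∧
    ∀ M : LieSubalgebra K N, (∀ s : S, ∀ x ∈ M, ρ s x ∈ M) → M = ⊤ ∨ ∀ s : S, ∀ x ∈ M, ρ s x = 0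

def IsCompletelyReducible : Prop :=
  ∀ p : Submodule K N, (∀ s : S, ∀ x ∈ p, ρ s x ∈ p) →
    ∃ q : Submodule K N, (∀ s : S, ∀ x ∈ q, ρ s x ∈ q) ∧ IsCompl p q

variable {ρ}

lemma apply_mem_of_isCompl {p q : Submodule K N} (hpq : IsCompl p q)
    (hp : ∀ s : S, ∀ x ∈ p, ρ s x = 0) (hq : ∀ s : S, ∀ x ∈ q, ρ s x ∈ q) (s : S) (n : N) :
    ρ s n ∈ q := by
  obtain ⟨a, ha, b, hb, rfl⟩ := mem_sup.mp (hpq.codisjoint.eq_top.ge (Submodule.mem_top (x := n)))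
  rw [map_add, hp s a ha, zero_add]
  exact hq s b hb

namespace IsCompletelyReducible

lemma apply_eq_zero_of_apply_apply_eq_zero (hcr : IsCompletelyReducible ρ)
    (h : ∀ (s t : S) (n : N), ρ t (ρ s n) = 0) (s : S) (n : N) : ρ s n = 0 := by
  let p := span K (actionImage ρ)
  have hp_kill : ∀ t : S, ∀ x ∈ p, ρ t x = 0 := fun t x hx => by
    have : p ≤ LinearMap.ker (ρ t : N →ₗ[K] N) := span_le.mpr <| by
      rintro _ ⟨s, n, rfl⟩
      exact h s t n
    exact this hx
  obtain ⟨q, hq, hpq⟩ := hcr p fun s x _ => subset_span ⟨s, x, rfl⟩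
  have : ρ s n ∈ p ⊓ q := ⟨subset_span ⟨s, n, rfl⟩, apply_mem_of_isCompl hpq hp_kill hq s n⟩
  simpa [hpq.inf_eq_bot] using this

lemma eq_derivedSeries_one_of_apply_eq_zero (hcr : IsCompletelyReducible ρ)
    (hgen : lieSpan K N (actionImage ρ) = ⊤) {p : Submodule K N}
    (hDp : (derivedSeries K N 1 : Submodule K N) ≤ p) (hp_inv : ∀ s : S, ∀ x ∈ p, ρ s x ∈ p)
    (hp_kill : ∀ s : S, ∀ x ∈ p, ρ s x = 0) : p = derivedSeries K N 1 := by
  obtain ⟨q, hq, hpq⟩ := hcr p hp_inv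
  have himage : span K (actionImage ρ) ≤ q := span_le.mpr <| by
    rintro _ ⟨s, n, rfl⟩
    exact apply_mem_of_isCompl hpq hp_kill hq s n
  have hqD : (derivedSeries K N 1 : Submodule K N) ⊔ q = ⊤ := by
    rw [eq_top_iff, ← span_sup_derivedSeries_one_eq_top hgen, sup_comm]
    exact sup_le_sup_left himage _
  refine (eq_of_le_of_inf_le_of_le_sup (z := q) hDp ?_ ?_).symm
  · exact hpq.inf_eq_bot ▸ bot_le
  · exact hqD ▸ le_top

end IsCompletelyReducible

lemma lie_lie_eq_zero_of_apply_lie_eq_zero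
    (hgen : lieSpan K N (actionImage ρ) = ⊤)
    (hkill : ∀ (s : S) (a b : N), ρ s ⁅a, b⁆ = 0) (a b c : N) : ⁅a, ⁅b, c⁆⁆ = 0 := by
  have hD := lie_mem_derivedSeries_one (K := K) b c
  have himage :
      Set.EqOn (LieDerivation.ad K N ⁅b, c⁆) (0 : LieDerivation K N N) (actionImage ρ) := by
    rintro _ ⟨s, n, rfl⟩
    have := hkill s n ⁅b, c⁆
    rw [LieDerivation.apply_lie_eq_add, (ρ s).apply_eq_zero_of_mem_derivedSeries_one_s2 (hkill s) hD,
      lie_zero, zero_add] at this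
    rw [LieDerivation.ad_apply_apply, ← lie_skew, this, neg_zero]
    rfl
  have : ⁅⁅b, c⁆, a⁆ = 0 := by
    simpa only [LieDerivation.ad_apply_apply, LieDerivation.coe_zero, Pi.zero_apply] using
      LieDerivation.eqOn_lieSpan himage (x := a) (by rw [hgen]; exact LieSubalgebra.mem_top a)
  rw [← lie_skew, this, neg_zero]

namespace IsMinimal

lemma nontrivial (hmin : IsMinimal ρ) : Nontrivial N :=
  let ⟨s, n, h⟩ := hmin.1
  ⟨⟨ρ s n, 0, h⟩⟩

lemma apply_lie_eq_zero [IsSolvable N] (hmin : IsMinimal ρ) (s : S) (a b : N) :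
    ρ s ⁅a, b⁆ = 0 := by
  have := hmin.nontrivial
  have hD_inv : ∀ s : S, ∀ x ∈ (derivedSeries K N 1 : LieSubalgebra K N),
      ρ s x ∈ (derivedSeries K N 1 : LieSubalgebra K N) :=
    fun s _ hx => (ρ s).apply_mem_derivedSeries_one hx
  refine (hmin.2 _ hD_inv).resolve_left (fun h => derivedSeries_one_ne_top K N ?_) s _
    (lie_mem_derivedSeries_one a b)
  rw [h, LieSubalgebra.top_toSubmodule]

lemma lieSpan_eq_top (hmin : IsMinimal ρ) (hcr : IsCompletelyReducible ρ) :
    lieSpan K N (actionImage ρ) = ⊤ := by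
  refine (hmin.2 _ fun s _ hx => (ρ s).apply_mem_lieSpan ?_ hx).resolve_right fun h => ?_
  · exact fun x _ => subset_lieSpan ⟨s, x, rfl⟩
  · obtain ⟨s, n, hsn⟩ := hmin.1
    exact hsn <| hcr.apply_eq_zero_of_apply_apply_eq_zero
      (fun s t n => h t _ (subset_lieSpan ⟨s, n, rfl⟩)) s n

lemma eq_derivedSeries_one_or_eq_top (hmin : IsMinimal ρ) (hcr : IsCompletelyReducible ρ)
    {p : Submodule K N} (hDp : (derivedSeries K N 1 : Submodule K N) ≤ p)
    (hp_inv : ∀ s : S, ∀ x ∈ p, ρ s x ∈ p) : p = derivedSeries K N 1 ∨ p = ⊤ := by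
  rcases hmin.2 (p.toLieSubalgebraOfDerivedLE hDp) hp_inv with h | h
  · right
    exact congrArg LieSubalgebra.toSubmodule h
  · left
    exact hcr.eq_derivedSeries_one_of_apply_eq_zero (hmin.lieSpan_eq_top hcr) hDp hp_inv h

end IsMinimal

lemma exists_apply_ne_zero_of_lieSpan_eq_top (hgen : lieSpan K N (actionImage ρ) = ⊤)
    (hD : (derivedSeries K N 1 : Submodule K N) ≠ ⊤) : ∃ (s : S) (n : N), ρ s n ≠ 0 := by
  by_contra! h
  have : lieSpan K N (actionImage ρ) ≤ ⊥ :=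
    lieSpan_le.mpr <| by rintro _ ⟨s, n, rfl⟩; exact (h s n).symm ▸ zero_mem _
  refine hD (eq_top_iff.mpr fun x _ => ?_)
  rw [(LieSubalgebra.mem_bot x).mp (this (hgen ▸ LieSubalgebra.mem_top x))]
  exact zero_mem _

lemma isMinimal_of_lie_lie_eq_zero (h2nil : ∀ a b c : N, ⁅a, ⁅b, c⁆⁆ = 0)
    (hgen : lieSpan K N (actionImage ρ) = ⊤)
    (hkill : ∀ (s : S) (a b : N), ρ s ⁅a, b⁆ = 0)
    (hD : (derivedSeries K N 1 : Submodule K N) ≠ ⊤)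
    (hirr : ∀ p : Submodule K N, (derivedSeries K N 1 : Submodule K N) ≤ p →
      (∀ s : S, ∀ x ∈ p, ρ s x ∈ p) → p = derivedSeries K N 1 ∨ p = ⊤) :
    IsMinimal ρ := by
  refine ⟨exists_apply_ne_zero_of_lieSpan_eq_top hgen hD, fun M hM_inv => ?_⟩
  have hD_kill s x (hx : x ∈ derivedSeries K N 1) : ρ s x = 0 :=
    (ρ s).apply_eq_zero_of_mem_derivedSeries_one_s2 (hkill s) hx
  have hMD_inv : ∀ s : S, ∀ x ∈ M.toSubmodule ⊔ derivedSeries K N 1,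
      ρ s x ∈ M.toSubmodule ⊔ derivedSeries K N 1 := by
    intro s x hx
    obtain ⟨m, hm, d, hd, rfl⟩ := mem_sup.mp hx
    rw [map_add, hD_kill s d hd, add_zero]
    exact mem_sup_left (hM_inv s m hm)
  rcases hirr _ le_sup_right hMD_inv with h | h
  · exact .inr fun s x hx => hD_kill s x (h.le (mem_sup_left hx))
  · exact .inl (M.eq_top_of_sup_derivedSeries_one_eq_top h2nil h)

end Action

end

theorem stmt2_general (K : Type*) [Field K]
    (S : Type*) [LieRing S] [LieAlgebra K S]
    (N : Type*) [LieRing N] [LieAlgebra K N]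
    (_hsolv : LieAlgebra.IsSolvable N)
    (i : S →ₗ⁅K⁆ LieDerivation K N N)
    (_hcr : ∀ p : Submodule K N, (∀ s : S, ∀ x ∈ p, i s x ∈ p) →
      ∃ q : Submodule K N, (∀ s : S, ∀ x ∈ q, i s x ∈ q) ∧ IsCompl p q) :
    ((∃ (s : S) (n : N), i s n ≠ 0) ∧
      ∀ M : LieSubalgebra K N, (∀ s : S, ∀ x ∈ M, i s x ∈ M) →
        (M = ⊤ ∨ ∀ s : S, ∀ x ∈ M, i s x = 0))
    ↔
    ((∀ a b c : N, ⁅a, ⁅b, c⁆⁆ = 0) ∧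
     (LieSubalgebra.lieSpan K N {x | ∃ (s : S) (n : N), i s n = x} = ⊤) ∧
     (∀ (s : S) (a b : N), i s ⁅a, b⁆ = 0) ∧
     (Submodule.span K {x | ∃ a b : N, ⁅a, b⁆ = x} ≠ ⊤ ∧
       ∀ p : Submodule K N, Submodule.span K {x | ∃ a b : N, ⁅a, b⁆ = x} ≤ p →
         (∀ s : S, ∀ x ∈ p, i s x ∈ p) →
         p = Submodule.span K {x | ∃ a b : N, ⁅a, b⁆ = x} ∨ p = ⊤)) := by
  rw [← coe_derivedSeries_one_eq]
  refine ⟨fun (hmin : IsMinimal i) => ?_, fun ⟨h2nil, hgen, hkill, hD, hirr⟩ =>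
    isMinimal_of_lie_lie_eq_zero h2nil hgen hkill hD hirr⟩
  have := hmin.nontrivial
  have hgen := hmin.lieSpan_eq_top _hcr
  have hkill := hmin.apply_lie_eq_zero
  exact ⟨lie_lie_eq_zero_of_apply_lie_eq_zero hgen hkill, hgen, hkill,
    derivedSeries_one_ne_top K N, fun p => hmin.eq_derivedSeries_one_or_eq_top _hcr⟩

/-- A solvable Lie `𝔰`-algebra `𝔫` is minimal (i.e. `[𝔰,𝔫] ≠ 0` and every
`𝔰`-invariant subalgebra `𝔫'` satisfies `𝔫' = 𝔫` or `[𝔰,𝔫'] = 0`) if and only if: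
(1) `𝔫` is 2-nilpotent, (2) `[𝔰,𝔫] = 𝔫`, (3) `[𝔰,D𝔫] = 0`, and
(4) `𝔫/D𝔫` is an irreducible `𝔰`-module. -/
theorem stmt2 (K : Type*) [Field K] [CharZero K]
    (S : Type*) [LieRing S] [LieAlgebra K S]
    (N : Type*) [LieRing N] [LieAlgebra K N] [Module.Finite K N]
    (_hsolv : LieAlgebra.IsSolvable N)
    (i : S →ₗ⁅K⁆ LieDerivation K N N)
    (_hcr : ∀ p : Submodule K N, (∀ s : S, ∀ x ∈ p, i s x ∈ p) →
      ∃ q : Submodule K N, (∀ s : S, ∀ x ∈ q, i s x ∈ q) ∧ IsCompl p q) :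
    ((∃ (s : S) (n : N), i s n ≠ 0) ∧
      ∀ M : LieSubalgebra K N, (∀ s : S, ∀ x ∈ M, i s x ∈ M) →
        (M = ⊤ ∨ ∀ s : S, ∀ x ∈ M, i s x = 0))
    ↔
    ((∀ a b c : N, ⁅a, ⁅b, c⁆⁆ = 0) ∧
     (LieSubalgebra.lieSpan K N {x | ∃ (s : S) (n : N), i s n = x} = ⊤) ∧
     (∀ (s : S) (a b : N), i s ⁅a, b⁆ = 0) ∧
     (Submodule.span K {x | ∃ a b : N, ⁅a, b⁆ = x} ≠ ⊤ ∧
       ∀ p : Submodule K N, Submodule.span K {x | ∃ a b : N, ⁅a, b⁆ = x} ≤ p →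
         (∀ s : S, ∀ x ∈ p, i s x ∈ p) →
         p = Submodule.span K {x | ∃ a b : N, ⁅a, b⁆ = x} ∨ p = ⊤)) :=
  stmt2_general K S N _hsolv i _hcr
end

section
/- Let 𝔰 be a Lie algebra over a field K of characteristic zero and let 𝔳 be a full 𝔰-module. Define 𝔥(𝔳) = 𝔳 ⊕ Alt_𝔰(𝔳)* with bracket [(x,z),(x',z')] = (0, e_{x,x'}) where e_{x,x'}(φ) = φ(x,x') for φ ∈ Alt_𝔰(𝔳) (the space of 𝔰-invariant alternating bilinear forms on 𝔳), and 𝔰-action [s,(x,z)] = ([s,x],0). Then 𝔥(𝔳) is a 2-nilpotent Lie 𝔰-algebra satisfying [𝔰,𝔥(𝔳)] = 𝔥(𝔳) and [𝔰, D𝔥(𝔳)] = 0. -/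
/-!
The bracket takes values in the factor `Alt_𝔰(𝔳)*` and vanishes there, so bilinearity,
alternation, Jacobi and 2-nilpotency are immediate, and `𝔰`-invariance of the forms is exactly
the derivation property. For generation: the images of the `𝔰`-action span `𝔳`, since an
invariant complement of their sum consists of `𝔰`-fixed vectors, which a full module lacks; and
the evaluations `e_{x,y}` separate the points of the finite-dimensional space `Alt_𝔰(𝔳)`, hence
span its dual. Brackets of `(x,0)` and `(y,0)` then give all of `0 × Alt_𝔰(𝔳)*`.
-/

attribute [local instance 100] LieRing.ofAssociativeRing

/-- The space of `𝔰`-invariant alternating bilinear forms on a module `V` with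
`𝔰`-action given by `ρ`. -/
def altInv (K S V : Type*) [Field K] [LieRing S] [LieAlgebra K S]
    [AddCommGroup V] [Module K V] (ρ : S →ₗ⁅K⁆ Module.End K V) :
    Submodule K (V →ₗ[K] V →ₗ[K] K) where
  carrier := {φ | (∀ x, φ x x = 0) ∧ ∀ (s : S) (x y : V), φ (ρ s x) y + φ x (ρ s y) = 0}
  add_mem' := by
    rintro a b ⟨ha1, ha2⟩ ⟨hb1, hb2⟩
    refine ⟨fun x => ?_, fun s x y => ?_⟩
    · simp [ha1 x, hb1 x]
    · simp only [LinearMap.add_apply]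
      linear_combination ha2 s x y + hb2 s x y
  zero_mem' := by
    refine ⟨fun x => rfl, fun s x y => ?_⟩
    simp
  smul_mem' := by
    rintro c a ⟨ha1, ha2⟩
    refine ⟨fun x => ?_, fun s x y => ?_⟩
    · simp [ha1 x]
    · simp only [LinearMap.smul_apply, smul_eq_mul]
      linear_combination c * ha2 s x y
/-- The element `e_{x,y}` of the dual of `Alt_𝔰(V)`, given by evaluation `φ ↦ φ(x,y)`. -/
def eMap (K S V : Type*) [Field K] [LieRing S] [LieAlgebra K S]
    [AddCommGroup V] [Module K V] (ρ : S →ₗ⁅K⁆ Module.End K V) (x y : V) :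
    (altInv K S V ρ) →ₗ[K] K where
  toFun φ := φ.1 x y
  map_add' a b := rfl
  map_smul' c a := rfl

theorem iSup_range_eq_top_of_isCompl {R V ι : Type*} [Ring R] [AddCommGroup V] [Module R V]
    (f : ι → Module.End R V)
    (hcr : ∀ p : Submodule R V, (∀ i, ∀ x ∈ p, f i x ∈ p) →
      ∃ q : Submodule R V, (∀ i, ∀ x ∈ q, f i x ∈ q) ∧ IsCompl p q)
    (hfull : ∀ x : V, (∀ i, f i x = 0) → x = 0) :
    ⨆ i, LinearMap.range (f i) = ⊤ := by
  set W := ⨆ i, LinearMap.range (f i)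
  have mem_W : ∀ i x, f i x ∈ W := fun i x => Submodule.mem_iSup_of_mem i ⟨x, rfl⟩
  obtain ⟨q, hq, hWq⟩ := hcr W fun i x _ => mem_W i x
  -- `f i` maps the complement `q` into `W ⊓ q = ⊥`, so `q` consists of killed vectors.
  have hq_bot : q = ⊥ := by
    refine (Submodule.eq_bot_iff q).2 fun x hx => hfull x fun i => ?_
    have : f i x ∈ W ⊓ q := ⟨mem_W i x, hq i x hx⟩
    rwa [hWq.inf_eq_bot, Submodule.mem_bot] at this
  simpa [hq_bot] using hWq.sup_eq_top

theorem Subspace.span_range_eq_top_of_separating {K A ι : Type*} [Field K] [AddCommGroup A]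
    [Module K A] [FiniteDimensional K A] (f : ι → Module.Dual K A)
    (hf : ∀ a, (∀ i, f i a = 0) → a = 0) :
    Submodule.span K (Set.range f) = ⊤ := by
  set E := Submodule.span K (Set.range f)
  have hE : E.dualCoannihilator = ⊥ :=
    (Submodule.eq_bot_iff _).2 fun a ha => hf a fun i =>
      (Submodule.mem_dualCoannihilator a).1 ha (f i) (Submodule.subset_span ⟨i, rfl⟩)
  rw [← Subspace.dualCoannihilator_dualAnnihilator_eq (W := E), hE,
    Submodule.dualAnnihilator_bot]

section eMap

variable {K S V : Type*} [Field K] [LieRing S] [LieAlgebra K S] [AddCommGroup V] [Module K V]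
  {ρ : S →ₗ⁅K⁆ Module.End K V}

theorem eMap_smul_add_left (c : K) (x y z : V) :
    eMap K S V ρ (c • x + y) z = c • eMap K S V ρ x z + eMap K S V ρ y z := by
  ext φ; simp [eMap]

theorem eMap_smul_add_right (c : K) (x y z : V) :
    eMap K S V ρ z (c • x + y) = c • eMap K S V ρ z x + eMap K S V ρ z y := by
  ext φ; simp [eMap]

theorem eMap_zero_right (x : V) : eMap K S V ρ x 0 = 0 := by
  ext φ; simp [eMap]

theorem eMap_self (x : V) : eMap K S V ρ x x = 0 := by
  ext φ; exact φ.2.1 x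

theorem eMap_act_left_add_eMap_act_right (s : S) (x y : V) :
    eMap K S V ρ (ρ s x) y + eMap K S V ρ x (ρ s y) = 0 := by
  ext φ; exact φ.2.2 s x y

theorem span_range_eMap [FiniteDimensional K V] :
    Submodule.span K (Set.range fun xy : V × V => eMap K S V ρ xy.1 xy.2) = ⊤ := by
  -- instance search does not find the additive group structure of this subspace by itself
  let := Submodule.addCommGroup (M := V →ₗ[K] V →ₗ[K] K) (altInv K S V ρ)
  apply Subspace.span_range_eq_top_of_separating
  intro φ hφ
  exact Subtype.ext <| LinearMap.ext₂ fun x y => hφ (x, y)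

end eMap

theorem stmt4_general (K S V : Type*) [Field K] [LieRing S] [LieAlgebra K S]
    [AddCommGroup V] [Module K V] [FiniteDimensional K V]
    (ρ : S →ₗ⁅K⁆ Module.End K V)
    (hcr : ∀ p : Submodule K V, (∀ s : S, ∀ x ∈ p, ρ s x ∈ p) →
      ∃ q : Submodule K V, (∀ s : S, ∀ x ∈ q, ρ s x ∈ q) ∧ IsCompl p q)
    (hfull : ∀ x : V, (∀ s : S, ρ s x = 0) → x = 0) :
    -- the bracket and the action on H = V × Alt_𝔰(V)*
    letI H := V × ((altInv K S V ρ) →ₗ[K] K)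
    letI b : H → H → H := fun p q => (0, eMap K S V ρ p.1 q.1)
    letI σ : S → H → H := fun s p => (ρ s p.1, 0)
    -- bracket is bilinear
    (∀ (c : K) (x y z : H), b (c • x + y) z = c • b x z + b y z
                          ∧ b z (c • x + y) = c • b z x + b z y) ∧
    -- alternating
    (∀ x : H, b x x = 0) ∧
    -- Jacobi identity and 2-nilpotency
    (∀ x y z : H, b x (b y z) + b y (b z x) + b z (b x y) = 0) ∧
    (∀ x y z : H, b x (b y z) = 0) ∧
    -- σ is a (linear) action by derivations
    (∀ (s : S) (c : K) (x y : H), σ s (c • x + y) = c • σ s x + σ s y) ∧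
    (∀ (s : S) (x y : H), σ s (b x y) = b (σ s x) y + b x (σ s y)) ∧
    -- [𝔰, D𝔥(𝔳)] = 0
    (∀ (s : S) (x y : H), σ s (b x y) = 0) ∧
    -- [𝔰, 𝔥(𝔳)] = 𝔥(𝔳)
    (∀ p : Submodule K H, (∀ (s : S) (h : H), σ s h ∈ p) →
      (∀ x ∈ p, ∀ y ∈ p, b x y ∈ p) → p = ⊤) := by
  refine ⟨fun c x y z => ⟨?_, ?_⟩, fun x => ?_, fun x y z => ?_, fun x y z => ?_,
    fun s c x y => ?_, fun s x y => ?_, fun s x y => ?_, fun p hσ hb => ?_⟩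
  · simp [eMap_smul_add_left]
  · simp [eMap_smul_add_right]
  · simp [eMap_self]
  · simp [eMap_zero_right]
  · simp [eMap_zero_right]
  · simp
  · simp [← eMap_act_left_add_eMap_act_right s x.1 y.1]
  · simp
  have hV : LinearMap.range (LinearMap.inl K V _) ≤ p := by
    rw [LinearMap.range_eq_map, ← iSup_range_eq_top_of_isCompl (fun s => ρ s) hcr hfull,
      Submodule.map_iSup]
    refine iSup_le fun s => ?_
    rintro _ ⟨_, ⟨x, rfl⟩, rfl⟩
    exact hσ s (x, 0)
  have hZ : LinearMap.range (LinearMap.inr K V _) ≤ p := by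
    rw [LinearMap.range_eq_map, ← span_range_eMap, Submodule.map_span, Submodule.span_le]
    rintro _ ⟨_, ⟨⟨x, y⟩, rfl⟩, rfl⟩
    exact hb (x, 0) (hV ⟨x, rfl⟩) (y, 0) (hV ⟨y, rfl⟩)
  rw [eq_top_iff, ← LinearMap.sup_range_inl_inr]
  exact sup_le hV hZ

/-- For a full `𝔰`-module `𝔳`, the space `𝔥(𝔳) = 𝔳 ⊕ Alt_𝔰(𝔳)*` with
bracket `[(x,z),(x',z')] = (0, e_{x,x'})` and `𝔰`-action `[s,(x,z)] = ([s,x],0)` is a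
2-nilpotent Lie `𝔰`-algebra (the bracket is alternating, bilinear, satisfies the Jacobi
identity, triple brackets vanish, and `𝔰` acts by derivations), satisfying
`[𝔰, 𝔥(𝔳)] = 𝔥(𝔳)` (the smallest subspace containing all `[s,h]` and closed under the
bracket is everything) and `[𝔰, D𝔥(𝔳)] = 0`. -/
theorem stmt4 (K S V : Type*) [Field K] [CharZero K] [LieRing S] [LieAlgebra K S]
    [AddCommGroup V] [Module K V] [FiniteDimensional K V]
    (ρ : S →ₗ⁅K⁆ Module.End K V)
    (hcr : ∀ p : Submodule K V, (∀ s : S, ∀ x ∈ p, ρ s x ∈ p) →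
      ∃ q : Submodule K V, (∀ s : S, ∀ x ∈ q, ρ s x ∈ q) ∧ IsCompl p q)
    (hfull : ∀ x : V, (∀ s : S, ρ s x = 0) → x = 0) :
    -- the bracket and the action on H = V × Alt_𝔰(V)*
    letI H := V × ((altInv K S V ρ) →ₗ[K] K)
    letI b : H → H → H := fun p q => (0, eMap K S V ρ p.1 q.1)
    letI σ : S → H → H := fun s p => (ρ s p.1, 0)
    -- bracket is bilinear
    (∀ (c : K) (x y z : H), b (c • x + y) z = c • b x z + b y z
                          ∧ b z (c • x + y) = c • b z x + b z y) ∧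
    -- alternating
    (∀ x : H, b x x = 0) ∧
    -- Jacobi identity and 2-nilpotency
    (∀ x y z : H, b x (b y z) + b y (b z x) + b z (b x y) = 0) ∧
    (∀ x y z : H, b x (b y z) = 0) ∧
    -- σ is a (linear) action by derivations
    (∀ (s : S) (c : K) (x y : H), σ s (c • x + y) = c • σ s x + σ s y) ∧
    (∀ (s : S) (x y : H), σ s (b x y) = b (σ s x) y + b x (σ s y)) ∧
    -- [𝔰, D𝔥(𝔳)] = 0
    (∀ (s : S) (x y : H), σ s (b x y) = 0) ∧
    -- [𝔰, 𝔥(𝔳)] = 𝔥(𝔳)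
    (∀ p : Submodule K H, (∀ (s : S) (h : H), σ s h ∈ p) →
      (∀ x ∈ p, ∀ y ∈ p, b x y ∈ p) → p = ⊤) :=
  stmt4_general K S V ρ hcr hfull
end

section
/- For a semisimple Lie algebra 𝔰 over a field of characteristic zero and a full 𝔰-module 𝔳, the semidirect product Lie algebra 𝔰 ⋉ 𝔥(𝔳) is perfect, i.e. equals its own derived subalgebra. -/
/-!
Each of the three summands of `𝔰 ⋉ 𝔥(𝔳)` is spanned by brackets. A semisimple Lie algebra is
perfect, so the brackets `[s, s']` span `𝔰`. The brackets `[s, (x, 0)] = (ρ s x, 0)` span `𝔳`: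
the sum of the images of the `ρ s` is invariant, so it has an invariant complement, on which `𝔰`
acts trivially since it meets that sum trivially; fullness makes the complement zero. The brackets
`[(x, 0), (y, 0)] = e_{x,y}` span `Alt_𝔰(𝔳)*` because `Alt_𝔰(𝔳)` is finite-dimensional and a form
vanishing at every pair `(x, y)` is zero.
-/

attribute [local instance 100] LieRing.ofAssociativeRing

theorem LieAlgebra.IsSemisimple.lie_top_eq_top (R L : Type*) [CommRing R] [LieRing L]
    [LieAlgebra R L] [LieAlgebra.IsSemisimple R L] :
    ⁅(⊤ : LieIdeal R L), (⊤ : LieIdeal R L)⁆ = ⊤ := by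
  rw [eq_top_iff]
  conv_lhs => rw [← LieAlgebra.IsSemisimple.sSup_atoms_eq_top (R := R) (L := L)]
  refine sSup_le fun I hI => ?_
  calc I = ⁅I, I⁆ := (lie_eq_self_of_isAtom_of_nonabelian I hI
          (LieAlgebra.IsSemisimple.non_abelian_of_isAtom I hI)).symm
    _ ≤ ⁅(⊤ : LieIdeal R L), (⊤ : LieIdeal R L)⁆ := LieSubmodule.mono_lie le_top le_top

theorem LieAlgebra.IsSemisimple.span_lie_eq_top (R L : Type*) [CommRing R] [LieRing L]
    [LieAlgebra R L] [LieAlgebra.IsSemisimple R L] :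
    Submodule.span R {x : L | ∃ a b : L, ⁅a, b⁆ = x} = ⊤ := by
  have := congrArg LieSubmodule.toSubmodule (lie_top_eq_top R L)
  rw [LieSubmodule.lieIdeal_oper_eq_linear_span', LieSubmodule.top_toSubmodule] at this
  simpa using this

theorem Submodule.iSup_range_eq_top_of_forall_invariant_isCompl {R V ι : Type*} [Ring R]
    [AddCommGroup V] [Module R V] (T : ι → Module.End R V)
    (hcr : ∀ p : Submodule R V, (∀ i, ∀ x ∈ p, T i x ∈ p) →
      ∃ q : Submodule R V, (∀ i, ∀ x ∈ q, T i x ∈ q) ∧ IsCompl p q)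
    (hfull : ∀ x : V, (∀ i, T i x = 0) → x = 0) :
    ⨆ i, LinearMap.range (T i) = ⊤ := by
  set p := ⨆ i, LinearMap.range (T i)
  have hTp : ∀ i x, T i x ∈ p := fun i x => Submodule.mem_iSup_of_mem i ⟨x, rfl⟩
  obtain ⟨q, hq, hpq⟩ := hcr p fun i x _ => hTp i x
  suffices q = ⊥ by simpa [this] using hpq.sup_eq_top
  refine (Submodule.eq_bot_iff q).mpr fun y hy => hfull y fun i => ?_
  exact (Submodule.disjoint_def.mp hpq.disjoint) _ (hTp i y) (hq i y hy)

section
variable {K S V : Type*} [Field K] [LieRing S] [LieAlgebra K S]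
    [AddCommGroup V] [Module K V] (ρ : S →ₗ⁅K⁆ Module.End K V)

-- Instance search does not find `Submodule.addCommGroup` for `altInv` on its own.
instance : AddCommGroup (altInv K S V ρ) :=
  Submodule.addCommGroup (R := K) (M := V →ₗ[K] V →ₗ[K] K) _

@[simp]
theorem eMap_zero_left (y : V) : eMap K S V ρ 0 y = 0 := by
  ext φ
  simp [eMap]

theorem span_eMap_eq_top [FiniteDimensional K V] :
    Submodule.span K {f | ∃ x y : V, eMap K S V ρ x y = f} = ⊤ := by
  refine Submodule.span_eq_top_of_ne_zero (R := K) (M := altInv K S V ρ) fun φ hφ => ?_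
  obtain ⟨x, y, hxy⟩ : ∃ x y, φ.1 x y ≠ 0 := by
    by_contra! h
    exact hφ (Subtype.ext (LinearMap.ext₂ h))
  exact ⟨_, ⟨x, y, rfl⟩, hxy⟩

end

theorem stmt11_general (K S V : Type*) [Field K] [LieRing S] [LieAlgebra K S]
    [LieAlgebra.IsSemisimple K S]
    [AddCommGroup V] [Module K V] [FiniteDimensional K V]
    (ρ : S →ₗ⁅K⁆ Module.End K V)
    (hcr : ∀ p : Submodule K V, (∀ s : S, ∀ x ∈ p, ρ s x ∈ p) →
      ∃ q : Submodule K V, (∀ s : S, ∀ x ∈ q, ρ s x ∈ q) ∧ IsCompl p q)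
    (hfull : ∀ x : V, (∀ s : S, ρ s x = 0) → x = 0) :
    Submodule.span K
      {z : S × (V × ((altInv K S V ρ) →ₗ[K] K)) |
        ∃ (s s' : S) (h h' : V × ((altInv K S V ρ) →ₗ[K] K)),
          z = (⁅s, s'⁆, (ρ s h'.1 - ρ s' h.1, eMap K S V ρ h.1 h'.1))} = ⊤ := by
  set P := Submodule.span K
    {z : S × (V × ((altInv K S V ρ) →ₗ[K] K)) |
      ∃ (s s' : S) (h h' : V × ((altInv K S V ρ) →ₗ[K] K)),
        z = (⁅s, s'⁆, (ρ s h'.1 - ρ s' h.1, eMap K S V ρ h.1 h'.1))}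
  have hS : ∀ s, (s, 0) ∈ P := by
    have : ⊤ ≤ P.comap (LinearMap.inl K _ _) := by
      rw [← LieAlgebra.IsSemisimple.span_lie_eq_top K S, Submodule.span_le]
      rintro _ ⟨a, b, rfl⟩
      exact Submodule.subset_span ⟨a, b, 0, 0, by simp [Prod.zero_eq_mk]⟩
    exact fun s => this Submodule.mem_top
  have hV : ∀ v, (0, (v, 0)) ∈ P := by
    have : ⊤ ≤ P.comap ((LinearMap.inr K S _).comp (LinearMap.inl K V _)) := by
      rw [← Submodule.iSup_range_eq_top_of_forall_invariant_isCompl ρ hcr hfull, iSup_le_iff]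
      rintro s _ ⟨x, rfl⟩
      exact Submodule.subset_span ⟨s, 0, 0, (x, 0), by simp⟩
    exact fun v => by simpa using this (Submodule.mem_top (x := v))
  have hD : ∀ f, (0, (0, f)) ∈ P := by
    have : ⊤ ≤ P.comap ((LinearMap.inr K S _).comp (LinearMap.inr K V _)) := by
      rw [← span_eMap_eq_top ρ, Submodule.span_le]
      rintro _ ⟨x, y, rfl⟩
      exact Submodule.subset_span ⟨0, 0, (x, 0), (y, 0), by simp⟩
    exact fun f => by simpa using this (Submodule.mem_top (x := f))
  refine eq_top_iff.mpr fun ⟨s, v, f⟩ _ => ?_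
  simpa using P.add_mem (P.add_mem (hS s) (hV v)) (hD f)

/-- For a semisimple Lie algebra `𝔰` and a full `𝔰`-module `𝔳`, the
semidirect product `𝔰 ⋉ 𝔥(𝔳)` is perfect: the span of all its brackets
`[(s,h),(s',h')] = ([s,s'], s·h' - s'·h + [h,h'])` is everything. -/
theorem stmt11 (K S V : Type*) [Field K] [CharZero K] [LieRing S] [LieAlgebra K S]
    [LieAlgebra.IsSemisimple K S] [Module.Finite K S]
    [AddCommGroup V] [Module K V] [FiniteDimensional K V]
    (ρ : S →ₗ⁅K⁆ Module.End K V)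
    (hcr : ∀ p : Submodule K V, (∀ s : S, ∀ x ∈ p, ρ s x ∈ p) →
      ∃ q : Submodule K V, (∀ s : S, ∀ x ∈ q, ρ s x ∈ q) ∧ IsCompl p q)
    (hfull : ∀ x : V, (∀ s : S, ρ s x = 0) → x = 0) :
    Submodule.span K
      {z : S × (V × ((altInv K S V ρ) →ₗ[K] K)) |
        ∃ (s s' : S) (h h' : V × ((altInv K S V ρ) →ₗ[K] K)),
          z = (⁅s, s'⁆, (ρ s h'.1 - ρ s' h.1, eMap K S V ρ h.1 h'.1))} = ⊤ :=
  stmt11_general K S V ρ hcr hfull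
end
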